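/- arXiv:math/0408206 — 2 statements merged into one kernel-verified Lean document; each statement's English description precedes it below -/
import Mathlib

section
/- Let V be a real inner product space with an orthogonal complex structure J, and let W ⊆ V be a subspace. Define Φ : W → W⊥ by Φ(X) = P_{W⊥}(JX) and Ξ : W⊥ → W by Ξ(U) = P_W(JU). Then: (i) ⟨Φ(X), Φ(Y)⟩ = ⟨X, Y⟩ + ⟨T_W(T_W X), Y⟩ for all X, Y ∈ W; (ii) T_{W⊥} ∘ Φ = −Φ ∘ T_W; (iii) Ξ ∘ Φ = −(id_W + T_W ∘ T_W) and Φ ∘ Ξ = −(id_{W⊥} + T_{W⊥} ∘ T_{W⊥}); (iv) consequently, if W has equal Kähler angles θ (i.e. T_W ∘ T_W = −cos²θ·id_W), then ‖Φ(X)‖² = sin²θ·‖X‖² for all X ∈ W and Ξ ∘ Φ = −sin²θ·id_W. -/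
/-!
Split `J X = T_W X + Φ X` along `V = W ⊕ W⊥` and apply `J` once more: as `J² = -1`,
`J (Φ X) = -X - J (T_W X)`. Projecting onto `W` gives `Ξ (Φ X) = -(X + T_W² X)`, projecting onto
`W⊥` gives `T_{W⊥} (Φ X) = -Φ (T_W X)`, and exchanging the roles of `W` and `W⊥` gives `Φ ∘ Ξ`.
Since `J` is skew-adjoint and orthogonal projections are self-adjoint, `⟪Φ X, Φ Y⟫ = -⟪Ξ (Φ X), Y⟫`,
which turns the formula for `Ξ ∘ Φ` into the one for `⟪Φ X, Φ Y⟫`.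
-/

open scoped RealInnerProductSpace

noncomputable section

variable {V : Type*} [NormedAddCommGroup V] [InnerProductSpace ℝ V] [FiniteDimensional ℝ V]

/-- `T_U = P_U ∘ J` restricted to the subspace `U`. -/
noncomputable def TU (J : V →ₗ[ℝ] V) (U : Submodule ℝ V) (X : U) : U :=
  U.orthogonalProjectionOnto (J X)

/-- `Φ : W → W⊥`, `Φ X = P_{W⊥}(J X)`. -/
noncomputable def PhiMap (J : V →ₗ[ℝ] V) (W : Submodule ℝ V) (X : W) : Wᗮ :=
  Wᗮ.orthogonalProjectionOnto (J X)

/-- `Ξ : W⊥ → W`, `Ξ U = P_W (J U)`. -/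
noncomputable def XiMap (J : V →ₗ[ℝ] V) (W : Submodule ℝ V) (U : Wᗮ) : W :=
  W.orthogonalProjectionOnto (J U)

section ComplementaryMaps

variable {R M : Type*} [Ring R] [AddCommGroup M] [Module R M] {J P Q : M →ₗ[R] M}

theorem map_compl_map (hJ : ∀ v, J (J v) = -v) (hPQ : ∀ v, P v + Q v = v) (x : M) :
    J (Q (J x)) = -(x + J (P (J x))) := by
  have h := hJ x
  rw [← hPQ (J x), map_add] at h
  linear_combination (norm := module) h

theorem proj_map_compl_map_of_fixed (hJ : ∀ v, J (J v) = -v) (hPQ : ∀ v, P v + Q v = v)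
    {x : M} (hx : P x = x) : P (J (Q (J x))) = -(x + P (J (P (J x)))) := by
  rw [map_compl_map hJ hPQ, map_neg, map_add, hx]

theorem compl_map_compl_map_of_fixed (hJ : ∀ v, J (J v) = -v) (hPQ : ∀ v, P v + Q v = v)
    {x : M} (hx : P x = x) : Q (J (Q (J x))) = -Q (J (P (J x))) := by
  have hQx : Q x = 0 := by simpa [hx] using hPQ x
  rw [map_compl_map hJ hPQ, map_neg, map_add, hQx, zero_add]

end ComplementaryMaps

section SkewAdjoint

variable {E : Type*} [NormedAddCommGroup E] [InnerProductSpace ℝ E] {J : E →ₗ[ℝ] E}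

theorem inner_map_right_eq_neg (hJorth : ∀ x y, ⟪J x, J y⟫ = ⟪x, y⟫) (hJsq : ∀ x, J (J x) = -x)
    (x y : E) : ⟪x, J y⟫ = -⟪J x, y⟫ := by
  rw [← hJorth x (J y), hJsq, inner_neg_right]

theorem inner_starProjection_orthogonal_map (hJorth : ∀ x y, ⟪J x, J y⟫ = ⟪x, y⟫)
    (hJsq : ∀ x, J (J x) = -x) (K : Submodule ℝ E) [K.HasOrthogonalProjection] (x : E)
    {y : E} (hy : y ∈ K) :
    ⟪Kᗮ.starProjection (J x), Kᗮ.starProjection (J y)⟫ =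
      -⟪K.starProjection (J (Kᗮ.starProjection (J x))), y⟫ := by
  rw [← Submodule.inner_starProjection_left_eq_right, Submodule.starProjection_eq_self_iff.mpr
      (Kᗮ.starProjection_apply_mem _), inner_map_right_eq_neg hJorth hJsq,
    Submodule.inner_starProjection_left_eq_right, Submodule.starProjection_eq_self_iff.mpr hy]

end SkewAdjoint

section Maps

variable (J : V →ₗ[ℝ] V) (W : Submodule ℝ V)

theorem coe_TU (X : W) : (TU J W X : V) = W.starProjection (J X) := rfl

theorem coe_PhiMap (X : W) : (PhiMap J W X : V) = Wᗮ.starProjection (J X) := rfl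

theorem coe_XiMap (U : Wᗮ) : (XiMap J W U : V) = W.starProjection (J U) := rfl

variable {J}

theorem XiMap_PhiMap (hJsq : ∀ x, J (J x) = -x) (X : W) :
    XiMap J W (PhiMap J W X) = -(X + TU J W (TU J W X)) := by
  ext
  simpa [coe_XiMap, coe_PhiMap, coe_TU] using
    proj_map_compl_map_of_fixed (P := (W.starProjection : V →ₗ[ℝ] V)) hJsq
      W.starProjection_add_starProjection_orthogonal (W.starProjection_eq_self_iff.mpr X.2)

theorem TU_orthogonal_PhiMap (hJsq : ∀ x, J (J x) = -x) (X : W) :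
    TU J Wᗮ (PhiMap J W X) = -PhiMap J W (TU J W X) := by
  ext
  simpa [coe_PhiMap, coe_TU] using
    compl_map_compl_map_of_fixed (P := (W.starProjection : V →ₗ[ℝ] V)) hJsq
      W.starProjection_add_starProjection_orthogonal (W.starProjection_eq_self_iff.mpr X.2)

theorem PhiMap_XiMap (hJsq : ∀ x, J (J x) = -x) (U : Wᗮ) :
    PhiMap J W (XiMap J W U) = -(U + TU J Wᗮ (TU J Wᗮ U)) := by
  ext
  simpa [coe_PhiMap, coe_XiMap, coe_TU] using
    proj_map_compl_map_of_fixed (P := (Wᗮ.starProjection : V →ₗ[ℝ] V)) hJsq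
      (fun v ↦ (add_comm _ _).trans (W.starProjection_add_starProjection_orthogonal v))
      (Wᗮ.starProjection_eq_self_iff.mpr U.2)

theorem inner_PhiMap_PhiMap (hJorth : ∀ x y, ⟪J x, J y⟫ = ⟪x, y⟫) (hJsq : ∀ x, J (J x) = -x)
    (X Y : W) : ⟪PhiMap J W X, PhiMap J W Y⟫ = ⟪X, Y⟫ + ⟪TU J W (TU J W X), Y⟫ := by
  rw [Submodule.coe_inner, coe_PhiMap, coe_PhiMap,
    inner_starProjection_orthogonal_map hJorth hJsq W _ Y.2, ← coe_PhiMap, ← coe_XiMap,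
    XiMap_PhiMap W hJsq]
  simp [inner_add_left]

theorem norm_PhiMap_sq_of_kahlerAngle (hJorth : ∀ x y, ⟪J x, J y⟫ = ⟪x, y⟫)
    (hJsq : ∀ x, J (J x) = -x) {θ : ℝ} (hθ : ∀ X : W, TU J W (TU J W X) = -(Real.cos θ ^ 2) • X)
    (X : W) : ‖PhiMap J W X‖ ^ 2 = Real.sin θ ^ 2 * ‖X‖ ^ 2 := by
  rw [← real_inner_self_eq_norm_sq, inner_PhiMap_PhiMap W hJorth hJsq, hθ, real_inner_smul_left,
    real_inner_self_eq_norm_sq, Real.sin_sq]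
  ring

theorem XiMap_PhiMap_of_kahlerAngle (hJsq : ∀ x, J (J x) = -x) {θ : ℝ}
    (hθ : ∀ X : W, TU J W (TU J W X) = -(Real.cos θ ^ 2) • X) (X : W) :
    XiMap J W (PhiMap J W X) = -(Real.sin θ ^ 2) • X := by
  rw [XiMap_PhiMap W hJsq, hθ, Real.sin_sq]
  module

end Maps

theorem stmt_0 (J : V →ₗ[ℝ] V)
    (hJorth : ∀ x y : V, ⟪J x, J y⟫ = ⟪x, y⟫)
    (hJsq : ∀ x : V, J (J x) = -x)
    (W : Submodule ℝ V) :
    (∀ X Y : W, ⟪PhiMap J W X, PhiMap J W Y⟫ = ⟪X, Y⟫ + ⟪TU J W (TU J W X), Y⟫) ∧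
    (∀ X : W, TU J Wᗮ (PhiMap J W X) = - PhiMap J W (TU J W X)) ∧
    (∀ X : W, XiMap J W (PhiMap J W X) = -(X + TU J W (TU J W X))) ∧
    (∀ U : Wᗮ, PhiMap J W (XiMap J W U) = -(U + TU J Wᗮ (TU J Wᗮ U))) ∧
    (∀ θ : ℝ, (∀ X : W, TU J W (TU J W X) = -(Real.cos θ ^ 2) • X) →
      (∀ X : W, ‖PhiMap J W X‖ ^ 2 = Real.sin θ ^ 2 * ‖X‖ ^ 2) ∧
      (∀ X : W, XiMap J W (PhiMap J W X) = -(Real.sin θ ^ 2) • X)) :=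
  ⟨inner_PhiMap_PhiMap W hJorth hJsq, TU_orthogonal_PhiMap W hJsq, XiMap_PhiMap W hJsq,
    PhiMap_XiMap W hJsq, fun _ hθ ↦
      ⟨norm_PhiMap_sq_of_kahlerAngle W hJorth hJsq hθ, XiMap_PhiMap_of_kahlerAngle W hJsq hθ⟩⟩

end
end

section
/- Identify ℝ⁸ with ℝ⁴ × ℝ⁴ with the Euclidean inner product and the orthogonal complex structure J₀(X,Y) = (−Y, X). Let E ⊆ ℝ⁸ be a 4-dimensional subspace with equal Kähler angles θ, i.e. the endomorphism T_E = P_E ∘ J₀ restricted to E satisfies T_E ∘ T_E = −c²·id_E, where c = cosθ ∈ [0,1]. Then for every orthonormal basis (v₁, v₂, v₃, v₄) of E, the determinant of the 8×8 real matrix whose columns are the standard coordinates of v₁, v₂, v₃, v₄, J₀v₁, J₀v₂, J₀v₃, J₀v₄ equals (1 − c²)² = sin⁴θ. In particular this determinant is strictly positive whenever c < 1, i.e. whenever E is not a complex subspace. -/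
/-!
STATEMENT 2: ℝ⁸ = ℝ⁴ × ℝ⁴ with `J₀(X,Y) = (−Y,X)`. If `E` is a 4-dimensional
subspace with equal Kähler angles `θ`, i.e. `T_E ∘ T_E = −c²·id_E` with
`c = cos θ ∈ [0,1]`, then for every orthonormal basis `(v₁,…,v₄)` of `E`, the
determinant of the 8×8 matrix with columns `v₁,…,v₄,J₀v₁,…,J₀v₄` equals
`(1 − c²)² = sin⁴ θ`; in particular it is positive whenever `c < 1`.
-/

open scoped RealInnerProductSpace

noncomputable section

/-- ℝ⁸ identified with ℝ⁴ × ℝ⁴ (coordinates indexed by `Fin 4 ⊕ Fin 4`). -/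
abbrev E8 : Type := EuclideanSpace ℝ (Fin 4 ⊕ Fin 4)

/-- `J₀ (X, Y) = (−Y, X)`: first four coordinates of `J₀ x` are minus the last four
coordinates of `x`, and the last four are the first four of `x`. -/
noncomputable def J0 : E8 →ₗ[ℝ] E8 :=
  Matrix.toEuclideanLin
    (Matrix.fromBlocks (0 : Matrix (Fin 4) (Fin 4) ℝ) (-1) 1 0)

/-- `T_E = P_E ∘ J₀` restricted to `E`. -/
noncomputable def TE (E : Submodule ℝ E8) (X : E) : E :=
  E.orthogonalProjectionOnto (J0 X)

/-- The 8×8 matrix whose columns are the standard coordinates of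
`v₁, v₂, v₃, v₄, J₀v₁, J₀v₂, J₀v₃, J₀v₄`. -/
noncomputable def colMatrix (v : Fin 4 → E8) : Matrix (Fin 4 ⊕ Fin 4) (Fin 4 ⊕ Fin 4) ℝ :=
  Matrix.of fun i j => Sum.elim (fun k => v k i) (fun k => J0 (v k) i) j

/-!
Let `M` be the matrix with columns `vᵢ, J₀vᵢ` and `A = (⟪vᵢ, J₀vⱼ⟫)`, the matrix of `T_E` in the
basis `v`, so that `A² = -c²·1`. Since `J₀` is orthogonal and skew, the Gram matrix `MᵀM` is
`[[1, A], [-A, 1]]`, hence `det M ^ 2 = det (1 + A²) = (1 - c²)⁴`. The sign is settled by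
`M = [[X, -Y], [Y, X]]` being the realification of the complex matrix `X + iY`, so that
`det M = |det (X + iY)|² ≥ 0`.
-/

open Matrix

lemma Matrix.gram_sumElim {𝕜 F m n : Type*} [Inner 𝕜 F] (v : m → F) (w : n → F) :
    gram 𝕜 (Sum.elim v w) =
      fromBlocks (gram 𝕜 v) (of fun i j ↦ inner 𝕜 (v i) (w j))
        (of fun i j ↦ inner 𝕜 (w i) (v j)) (gram 𝕜 w) := by
  ext (i | i) (j | j) <;> rfl

section BlockDeterminant

open Complex

variable {n : Type*} [Fintype n] [DecidableEq n]

lemma Matrix.triangularize_fromBlocks_neg (X Y : Matrix n n ℝ) :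
    fromBlocks (1 : Matrix n n ℂ) (I • 1) 0 1 * (fromBlocks X (-Y) Y X).map ofReal *
        fromBlocks 1 (-(I • 1)) 0 1 =
      fromBlocks (X.map ofReal + I • Y.map ofReal) 0 (Y.map ofReal)
        (X.map ofReal - I • Y.map ofReal) := by
  simp only [fromBlocks_map, fromBlocks_multiply, smul_mul, Matrix.one_mul, Matrix.mul_one,
    Matrix.zero_mul, Matrix.mul_zero, Matrix.mul_smul, Matrix.map_neg _ ofReal_neg, add_zero,
    zero_add, Matrix.mul_neg]
  congr 1
  · linear_combination (norm := module) -(I_mul_I • Y.map ofReal)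
  · abel

lemma Matrix.det_fromBlocks_neg_eq_normSq (X Y : Matrix n n ℝ) :
    (fromBlocks X (-Y) Y X).det = normSq (X.map ofReal + I • Y.map ofReal).det := by
  set W := X.map ofReal + I • Y.map ofReal
  have hconj : X.map ofReal - I • Y.map ofReal = (starRingEnd ℂ).mapMatrix W := by
    ext i j
    simp [W, sub_eq_add_neg]
  have hunip (B : Matrix n n ℂ) : (fromBlocks (1 : Matrix n n ℂ) B 0 1).det = 1 := by simp
  apply ofReal_injective
  calc ((fromBlocks X (-Y) Y X).det : ℂ) = ((fromBlocks X (-Y) Y X).map ofReal).det :=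
        ofRealHom.map_det _
    _ = W.det * starRingEnd ℂ W.det := by
        rw [← one_mul (Matrix.det _), ← hunip (I • 1), ← mul_one (_ * _), ← hunip (-(I • 1)),
          ← det_mul, ← det_mul, triangularize_fromBlocks_neg, det_fromBlocks_zero₁₂, hconj,
          RingHom.map_det]
    _ = normSq W.det := mul_conj _

lemma Matrix.det_fromBlocks_neg_nonneg (X Y : Matrix n n ℝ) :
    0 ≤ (fromBlocks X (-Y) Y X).det :=
  det_fromBlocks_neg_eq_normSq X Y ▸ normSq_nonneg _

end BlockDeterminant

lemma LinearMap.toMatrix_orthogonalProjectionOnto_comp {𝕜 F ι : Type*} [RCLike 𝕜]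
    [NormedAddCommGroup F] [InnerProductSpace 𝕜 F] [Fintype ι] [DecidableEq ι]
    {K : Submodule 𝕜 F} [K.HasOrthogonalProjection] (b : OrthonormalBasis ι 𝕜 K) (f : F →ₗ[𝕜] F) :
    toMatrix b.toBasis b.toBasis (K.orthogonalProjectionOnto.toLinearMap ∘ₗ f ∘ₗ K.subtype) =
      of fun i j ↦ inner 𝕜 (b i : F) (f (b j)) := by
  ext i j
  rw [toMatrix_apply, OrthonormalBasis.coe_toBasis_repr_apply, b.repr_apply_apply, of_apply]
  exact Submodule.inner_orthogonalProjectionOnto_eq_of_mem_left _ _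

lemma Orthonormal.exists_orthonormalBasis_of_span_eq {𝕜 F ι : Type*} [RCLike 𝕜]
    [NormedAddCommGroup F] [InnerProductSpace 𝕜 F] [Fintype ι] {K : Submodule 𝕜 F} {v : ι → F}
    (hon : Orthonormal 𝕜 v) (hspan : Submodule.span 𝕜 (Set.range v) = K) :
    ∃ b : OrthonormalBasis ι 𝕜 K, ∀ i, (b i : F) = v i := by
  subst hspan
  set w : ι → Submodule.span 𝕜 (Set.range v) := fun i ↦ ⟨v i, Submodule.subset_span ⟨i, rfl⟩⟩
  have hw : Orthonormal 𝕜 w := (Submodule.subtypeₗᵢ _).orthonormal_comp_iff (v := w) |>.1 hon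
  have hw_span : ⊤ ≤ Submodule.span 𝕜 (Set.range w) := by
    rw [← Submodule.span_span_coe_preimage]
    gcongr
    rintro ⟨_, _⟩ ⟨i, rfl⟩
    exact ⟨i, rfl⟩
  exact ⟨OrthonormalBasis.mk hw hw_span, fun i ↦ by simp [w]⟩

@[simp]
lemma J0_apply_inl (x : E8) (a : Fin 4) : J0 x (Sum.inl a) = -x (Sum.inr a) := by
  simp [J0, mulVec, dotProduct, Fintype.sum_sum_type, one_apply]

@[simp]
lemma J0_apply_inr (x : E8) (a : Fin 4) : J0 x (Sum.inr a) = x (Sum.inl a) := by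
  simp [J0, mulVec, dotProduct, Fintype.sum_sum_type, one_apply]

lemma inner_J0_J0 (x y : E8) : ⟪J0 x, J0 y⟫ = ⟪x, y⟫ := by
  simp only [PiLp.inner_apply, Fintype.sum_sum_type, J0_apply_inl, J0_apply_inr]
  simp only [RCLike.inner_apply, conj_trivial, neg_mul_neg]
  ring

lemma inner_J0_left (x y : E8) : ⟪J0 x, y⟫ = -⟪x, J0 y⟫ := by
  simp only [PiLp.inner_apply, Fintype.sum_sum_type, J0_apply_inl, J0_apply_inr]
  simp only [RCLike.inner_apply, conj_trivial, mul_neg, neg_mul, Finset.sum_neg_distrib]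
  ring

lemma transpose_colMatrix_mul_self (v : Fin 4 → E8) :
    (colMatrix v)ᵀ * colMatrix v = gram ℝ (Sum.elim v (J0 ∘ v)) := by
  rw [gram_eq_conjTranspose_mul (EuclideanSpace.basisFun _ ℝ),
    conjTranspose_eq_transpose_of_trivial]
  congr <;> ext i (j | j) <;> simp [colMatrix]

lemma colMatrix_eq_fromBlocks (v : Fin 4 → E8) :
    colMatrix v = fromBlocks (of fun i k ↦ v k (Sum.inl i)) (-of fun i k ↦ v k (Sum.inr i))
      (of fun i k ↦ v k (Sum.inr i)) (of fun i k ↦ v k (Sum.inl i)) := by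
  ext (i | i) (j | j) <;> simp [colMatrix]

lemma det_colMatrix_nonneg (v : Fin 4 → E8) : 0 ≤ (colMatrix v).det :=
  colMatrix_eq_fromBlocks v ▸ det_fromBlocks_neg_nonneg _ _

def kahlerMatrix {ι : Type*} (v : ι → E8) : Matrix ι ι ℝ := of fun i j ↦ ⟪v i, J0 (v j)⟫

lemma gram_sumElim_J0 {ι : Type*} (v : ι → E8) :
    gram ℝ (Sum.elim v (J0 ∘ v)) =
      fromBlocks (gram ℝ v) (kahlerMatrix v) (-kahlerMatrix v) (gram ℝ v) := by
  rw [gram_sumElim]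
  congr 1 <;> ext i j
  · exact inner_J0_left _ _
  · exact inner_J0_J0 _ _

lemma det_colMatrix_sq {v : Fin 4 → E8} (hon : Orthonormal ℝ v) :
    (colMatrix v).det ^ 2 = (1 + kahlerMatrix v * kahlerMatrix v).det := by
  nth_rw 1 [sq, ← det_transpose]
  rw [← det_mul, transpose_colMatrix_mul_self, gram_sumElim_J0,
    gram_eq_one_iff_orthonormal.2 hon, det_fromBlocks_one₁₁, Matrix.neg_mul, sub_neg_eq_add]

lemma kahlerMatrix_mul_self {ι : Type*} [Fintype ι] [DecidableEq ι] {E : Submodule ℝ E8} {c : ℝ}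
    (hEKA : ∀ X : E, TE E (TE E X) = -(c ^ 2) • X) (b : OrthonormalBasis ι ℝ E) :
    kahlerMatrix (fun i ↦ (b i : E8)) * kahlerMatrix (fun i ↦ (b i : E8)) = -(c ^ 2) • 1 := by
  set T := E.orthogonalProjectionOnto.toLinearMap ∘ₗ J0 ∘ₗ E.subtype
  have hT : T * T = -(c ^ 2) • 1 := LinearMap.ext hEKA
  have hA : kahlerMatrix (fun i ↦ (b i : E8)) = LinearMap.toMatrix b.toBasis b.toBasis T :=
    (LinearMap.toMatrix_orthogonalProjectionOnto_comp b J0).symm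
  rw [hA, ← LinearMap.toMatrix_mul, hT, map_smul, LinearMap.toMatrix_one]

theorem stmt_2_general (E : Submodule ℝ E8)
    (c : ℝ) (hc0 : 0 ≤ c)
    (hEKA : ∀ X : E, TE E (TE E X) = -(c ^ 2) • X)
    (v : Fin 4 → E8) (hon : Orthonormal ℝ v)
    (hspan : Submodule.span ℝ (Set.range v) = E) :
    (colMatrix v).det = (1 - c ^ 2) ^ 2 ∧
    (c < 1 → 0 < (colMatrix v).det) := by
  obtain ⟨b, hb⟩ := hon.exists_orthonormalBasis_of_span_eq hspan
  have hA : kahlerMatrix v * kahlerMatrix v = -(c ^ 2) • 1 := by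
    simpa only [hb] using kahlerMatrix_mul_self hEKA b
  have hsq : (colMatrix v).det ^ 2 = ((1 - c ^ 2) ^ 2) ^ 2 := by
    rw [det_colMatrix_sq hon, hA, ← one_smul ℝ (1 : Matrix (Fin 4) (Fin 4) ℝ), smul_smul,
      ← add_smul, det_smul, det_one, Fintype.card_fin]
    ring
  have hdet : (colMatrix v).det = (1 - c ^ 2) ^ 2 :=
    (pow_left_inj₀ (det_colMatrix_nonneg v) (sq_nonneg _) two_ne_zero).1 hsq
  exact ⟨hdet, fun hc ↦ hdet ▸ pow_pos (by nlinarith) 2⟩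

theorem stmt_2 (E : Submodule ℝ E8) (hE : Module.finrank ℝ E = 4)
    (c : ℝ) (hc0 : 0 ≤ c) (hc1 : c ≤ 1)
    (hEKA : ∀ X : E, TE E (TE E X) = -(c ^ 2) • X)
    (v : Fin 4 → E8) (hvE : ∀ k, v k ∈ E) (hon : Orthonormal ℝ v)
    (hspan : Submodule.span ℝ (Set.range v) = E) :
    (colMatrix v).det = (1 - c ^ 2) ^ 2 ∧
    (c < 1 → 0 < (colMatrix v).det) :=
  stmt_2_general E c hc0 hEKA v hon hspan

end
end
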